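/- arXiv:2209.13282 — 9 statements merged into one kernel-verified Lean document; each statement's English description precedes it below -/
import Mathlib

section
/- If A is a finite-dimensional associative algebra admitting a faithful linear functional, then A has a multiplicative unit. -/
/-!
Left multiplication composed with `ω` is an injective linear map `A → Dual A`, hence, by
dimension count, surjective; a preimage `e` of `ω` itself satisfies `ω (e * c) = ω c`.
Left faithfulness then upgrades this to `e * a = a` (test against `a * c`) and afterwards to
`a * e = a` (test against `c`, using `e * c = c`).
-/

section FaithfulFunctional

variable {K A : Type*} [Field K] [NonUnitalRing A] [Module K A] (ω : A →ₗ[K] K)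

theorem eq_of_forall_apply_mul_eq (hleft : ∀ a : A, (∀ c : A, ω (a * c) = 0) → a = 0)
    {x y : A} (h : ∀ c : A, ω (x * c) = ω (y * c)) : x = y :=
  sub_eq_zero.mp <| hleft _ fun c => by rw [sub_mul, map_sub, h, sub_self]

variable [IsScalarTower K A A] [SMulCommClass K A A]

theorem injective_compr₂_mul (hleft : ∀ a : A, (∀ c : A, ω (a * c) = 0) → a = 0) :
    Function.Injective ((LinearMap.mul K A).compr₂ ω) := fun _ _ hxy =>
  eq_of_forall_apply_mul_eq ω hleft (LinearMap.congr_fun hxy)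

theorem exists_forall_apply_mul_eq [FiniteDimensional K A]
    (hleft : ∀ a : A, (∀ c : A, ω (a * c) = 0) → a = 0) :
    ∃ e : A, ∀ c : A, ω (e * c) = ω c := by
  have hsurj : Function.Surjective ((LinearMap.mul K A).compr₂ ω) :=
    (LinearMap.injective_iff_surjective_of_finrank_eq_finrank
      Subspace.dual_finrank_eq.symm).mp (injective_compr₂_mul ω hleft)
  obtain ⟨e, he⟩ := hsurj ω
  exact ⟨e, LinearMap.congr_fun he⟩

end FaithfulFunctional

theorem unital_of_faithful_functional_general
    {A : Type*} [NonUnitalRing A] [Module ℂ A]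
    [IsScalarTower ℂ A A] [SMulCommClass ℂ A A] [FiniteDimensional ℂ A]
    (ω : A →ₗ[ℂ] ℂ)
    (hleft : ∀ a : A, (∀ c : A, ω (a * c) = 0) → a = 0) :
    ∃ e : A, ∀ a : A, e * a = a ∧ a * e = a := by
  obtain ⟨e, he⟩ := exists_forall_apply_mul_eq ω hleft
  have e_mul : ∀ a : A, e * a = a := fun a =>
    eq_of_forall_apply_mul_eq ω hleft fun c => by rw [mul_assoc, he]
  exact ⟨e, fun a => ⟨e_mul a,
    eq_of_forall_apply_mul_eq ω hleft fun c => by rw [mul_assoc, e_mul]⟩⟩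

/-- A finite-dimensional associative ℂ-algebra admitting a faithful
linear functional is unital. -/
theorem unital_of_faithful_functional
    {A : Type*} [NonUnitalRing A] [Module ℂ A]
    [IsScalarTower ℂ A A] [SMulCommClass ℂ A A] [FiniteDimensional ℂ A]
    (ω : A →ₗ[ℂ] ℂ)
    (hleft : ∀ a : A, (∀ c : A, ω (a * c) = 0) → a = 0)
    (hright : ∀ c : A, (∀ a : A, ω (a * c) = 0) → c = 0) :
    ∃ e : A, ∀ a : A, e * a = a ∧ a * e = a :=
  unital_of_faithful_functional_general ω hleft
end

section
/- A finite-dimensional algebra with a non-degenerate product need not be unital: the subspace A of the 3×3 matrix algebra spanned by the matrix units e₁₁, e₁₂, e₁₃, e₂₃, e₃₃ is an idempotent subalgebra (A² = A) whose multiplication is non-degenerate, but A has no unit element. -/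
open Matrix

/-- The matrix unit `e i j` in `M₃(ℂ)`. -/
noncomputable def matUnit (i j : Fin 3) : Matrix (Fin 3) (Fin 3) ℂ :=
  Matrix.single i j 1

/-- The subspace of `M₃(ℂ)` spanned by `e₁₁, e₁₂, e₁₃, e₂₃, e₃₃`. -/
noncomputable def Asub : Submodule ℂ (Matrix (Fin 3) (Fin 3) ℂ) :=
  Submodule.span ℂ
    {matUnit 0 0, matUnit 0 1, matUnit 0 2, matUnit 1 2, matUnit 2 2}

/-!
With zero-based indices, `A` consists of the matrices supported on the first row and the
last column. Multiplying by the units `e₀ₖ` on the left and `eₖ₂` on the right isolates the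
rows and the columns of a matrix, which gives non-degeneracy; every generator is a product
`e₀₀ e₀ⱼ` or `eᵢ₂ e₂₂`, which gives `A² = A`. A unit `e` would need `e e₁₂ = e₁₂`, i.e. the
entry `e₁₁ = 1`, but that entry vanishes on `A`.
-/

namespace Matrix

variable {l m n α : Type*} [Fintype m] [DecidableEq m] [NonAssocSemiring α]

theorem eq_zero_of_forall_mul_single_eq_zero [DecidableEq n] {M : Matrix l m α} (j : n)
    (h : ∀ i : m, M * single i j (1 : α) = 0) : M = 0 := by
  ext k i
  simpa using congrFun (congrFun (h i) k) j

theorem eq_zero_of_forall_single_mul_eq_zero [DecidableEq l] {M : Matrix m n α} (i : l)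
    (h : ∀ j : m, single i j (1 : α) * M = 0) : M = 0 := by
  ext j k
  simpa using congrFun (congrFun (h j) i) k

end Matrix

theorem matUnit_mem_Asub {i j : Fin 3} (h : i = 0 ∨ j = 2) : matUnit i j ∈ Asub := by
  apply Submodule.subset_span
  rcases h with rfl | rfl
  · fin_cases j <;> simp
  · fin_cases i <;> simp

theorem mem_Asub_iff {x : Matrix (Fin 3) (Fin 3) ℂ} :
    x ∈ Asub ↔ ∀ i j, i ≠ 0 → j ≠ 2 → x i j = 0 := by
  constructor
  · intro hx
    induction hx using Submodule.span_induction with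
    | mem m hm =>
      intro i j hi hj
      rcases hm with rfl | rfl | rfl | rfl | rfl <;>
        simp [matUnit, hi.symm, hj.symm]
    | zero => simp
    | add a b _ _ ha hb =>
      intro i j hi hj
      simp [ha i j hi hj, hb i j hi hj]
    | smul c a _ ha =>
      intro i j hi hj
      simp [ha i j hi hj]
  · intro hx
    rw [matrix_eq_sum_single x]
    refine Submodule.sum_mem _ fun i _ ↦ Submodule.sum_mem _ fun j _ ↦ ?_
    by_cases hij : i = 0 ∨ j = 2
    · rw [← mul_one (x i j), ← smul_eq_mul, ← smul_single]
      exact Submodule.smul_mem _ _ (matUnit_mem_Asub hij)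
    · rw [not_or] at hij
      simp [hx i j hij.1 hij.2]

theorem mul_mem_Asub {x y : Matrix (Fin 3) (Fin 3) ℂ} (hx : x ∈ Asub) (hy : y ∈ Asub) :
    x * y ∈ Asub := by
  rw [mem_Asub_iff] at hx hy ⊢
  intro i j hi hj
  -- the only possibly nonzero term `x i k * y k j` with `i ≠ 0` has `k = 2`, killed by `y 2 j`
  simp [mul_apply, Fin.sum_univ_three, hx i 0 hi, hx i 1 hi, hy 2 j (by decide) hj]

theorem exists_matUnit_eq_mul {i j : Fin 3} (h : i = 0 ∨ j = 2) :
    ∃ x ∈ Asub, ∃ y ∈ Asub, matUnit i j = x * y := by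
  rcases h with rfl | rfl
  · exact ⟨matUnit 0 0, matUnit_mem_Asub (.inl rfl), matUnit 0 j, matUnit_mem_Asub (.inl rfl),
      by simp [matUnit]⟩
  · exact ⟨matUnit i 2, matUnit_mem_Asub (.inr rfl), matUnit 2 2, matUnit_mem_Asub (.inr rfl),
      by simp [matUnit]⟩

/-- `Asub` is a subalgebra of `M₃(ℂ)`, it is idempotent (`A² = A`),
its multiplication is non-degenerate, but it has no unit element. -/
theorem Asub_idempotent_nondegenerate_not_unital :
    (∀ x ∈ Asub, ∀ y ∈ Asub, x * y ∈ Asub) ∧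
    (∀ z ∈ Asub, z ∈ Submodule.span ℂ {m | ∃ x ∈ Asub, ∃ y ∈ Asub, m = x * y}) ∧
    (∀ x ∈ Asub, (∀ y ∈ Asub, x * y = 0) → x = 0) ∧
    (∀ x ∈ Asub, (∀ y ∈ Asub, y * x = 0) → x = 0) ∧
    ¬ (∃ e ∈ Asub, ∀ x ∈ Asub, e * x = x ∧ x * e = x) := by
  refine ⟨fun x hx y hy ↦ mul_mem_Asub hx hy, ?_, ?_, ?_, ?_⟩
  · refine fun z hz ↦ Submodule.span_mono ?_ hz
    rintro m (rfl | rfl | rfl | rfl | rfl) <;> exact exists_matUnit_eq_mul (by simp)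
  · exact fun x _ h ↦
      eq_zero_of_forall_mul_single_eq_zero 2 fun _ ↦ h _ (matUnit_mem_Asub (.inr rfl))
  · exact fun x _ h ↦
      eq_zero_of_forall_single_mul_eq_zero 0 fun _ ↦ h _ (matUnit_mem_Asub (.inl rfl))
  · rintro ⟨e, he, hunit⟩
    have h12 : (e * matUnit 1 2) 1 2 = 1 := by
      rw [(hunit _ (matUnit_mem_Asub (.inr rfl))).1]
      simp [matUnit]
    simp [matUnit, mem_Asub_iff.1 he 1 1 one_ne_zero (by decide)] at h12
end

section
/- Let A and B be finite-dimensional unital ℂ-algebras with a non-degenerate bilinear pairing ⟨·,·⟩ : A × B → ℂ, and let Δ be the coproduct on B induced by the product of A (⟨aa', b⟩ = ⟨a ⊗ a', Δ(b)⟩). Then the counit ε_B on B defined by ε_B(b) = ⟨1, b⟩ is an algebra homomorphism if and only if Δ(1_A) = 1_A ⊗ 1_A holds for the induced coproduct on A. -/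
open TensorProduct

/-!
Since `⟨Δ 1, b ⊗ b'⟩ = ⟨1, b b'⟩` and `⟨1 ⊗ 1, b ⊗ b'⟩ = ⟨1, b⟩⟨1, b'⟩`, multiplicativity of `ε_B`
says exactly that `Δ 1` and `1 ⊗ 1` agree against every `b ⊗ b'`. These functionals separate
`A ⊗ A`: `β ⊗ β : A ⊗ A → B* ⊗ B*` is injective over a field, and `B* ⊗ B* ≅ (B ⊗ B)*` for
finite-dimensional `B`.
-/

/-- The pairing of `A ⊗ A` with the pair `(b, b')`, i.e. `x ⊗ y ↦ ⟨x,b⟩⟨y,b'⟩`. -/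
noncomputable def pairTT {A B : Type*} [AddCommGroup A] [Module ℂ A]
    [AddCommGroup B] [Module ℂ B]
    (β : A →ₗ[ℂ] B →ₗ[ℂ] ℂ) (b b' : B) : A ⊗[ℂ] A →ₗ[ℂ] ℂ :=
  (LinearMap.mul' ℂ ℂ).comp (TensorProduct.map (β.flip b) (β.flip b'))

section pairTT

variable {A B : Type*} [AddCommGroup A] [Module ℂ A] [AddCommGroup B] [Module ℂ B]
  (β : A →ₗ[ℂ] B →ₗ[ℂ] ℂ)

lemma pairTT_tmul (b b' : B) (a a' : A) :
    pairTT β b b' (a ⊗ₜ[ℂ] a') = β a b * β a' b' := rfl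

lemma pairTT_eq_dualDistrib_map (b b' : B) (x : A ⊗[ℂ] A) :
    pairTT β b b' x = dualDistrib ℂ B B (map β β x) (b ⊗ₜ[ℂ] b') := by
  induction x using TensorProduct.induction_on with
  | zero => simp
  | tmul a a' => rfl
  | add x y hx hy => simp only [map_add, LinearMap.add_apply, hx, hy]

lemma tensor_ext_of_pairTT [FiniteDimensional ℂ B] (hβ : Function.Injective β)
    {x y : A ⊗[ℂ] A} (h : ∀ b b' : B, pairTT β b b' x = pairTT β b b' y) : x = y := by
  apply map_injective_of_flat_flat β β hβ hβ
  apply (dualDistribEquiv ℂ B B).injective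
  change dualDistrib ℂ B B _ = dualDistrib ℂ B B _
  refine TensorProduct.ext' fun b b' => ?_
  simpa only [pairTT_eq_dualDistrib_map] using h b b'

end pairTT

theorem counitB_hom_iff_coprodA_unital_general
    {A B : Type*} [Ring A] [Algebra ℂ A]
    [Ring B] [Algebra ℂ B] [FiniteDimensional ℂ B]
    (β : A →ₗ[ℂ] B →ₗ[ℂ] ℂ)
    (hβA : ∀ a : A, (∀ b : B, β a b = 0) → a = 0)
    (Δ : A →ₗ[ℂ] A ⊗[ℂ] A)
    (hΔ : ∀ (a : A) (b b' : B), pairTT β b b' (Δ a) = β a (b * b')) :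
    (∀ b b' : B, β 1 (b * b') = β 1 b * β 1 b') ↔
      Δ 1 = (1 : A) ⊗ₜ[ℂ] (1 : A) := by
  have hβ : Function.Injective β :=
    (injective_iff_map_eq_zero β).mpr fun a ha => hβA a fun b => by simp [ha]
  constructor
  · intro hε
    exact tensor_ext_of_pairTT β hβ fun b b' => by rw [hΔ, pairTT_tmul, hε]
  · intro h1 b b'
    rw [← hΔ, h1, pairTT_tmul]

/-- For a non-degenerate pairing of finite-dimensional unital ℂ-algebras
`A` and `B`, with induced coproduct `Δ` on `A` (determined by
`⟨Δ a, b ⊗ b'⟩ = ⟨a, b * b'⟩`), the counit `ε_B = ⟨1, ·⟩` on `B` is an algebra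
homomorphism if and only if `Δ 1 = 1 ⊗ 1`. -/
theorem counitB_hom_iff_coprodA_unital
    {A B : Type*} [Ring A] [Algebra ℂ A] [FiniteDimensional ℂ A]
    [Ring B] [Algebra ℂ B] [FiniteDimensional ℂ B]
    (β : A →ₗ[ℂ] B →ₗ[ℂ] ℂ)
    (hβA : ∀ a : A, (∀ b : B, β a b = 0) → a = 0)
    (hβB : ∀ b : B, (∀ a : A, β a b = 0) → b = 0)
    (Δ : A →ₗ[ℂ] A ⊗[ℂ] A)
    (hΔ : ∀ (a : A) (b b' : B), pairTT β b b' (Δ a) = β a (b * b')) :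
    (∀ b b' : B, β 1 (b * b') = β 1 b * β 1 b') ↔
      Δ 1 = (1 : A) ⊗ₜ[ℂ] (1 : A) :=
  counitB_hom_iff_coprodA_unital_general β hβA Δ hΔ
end

section
/- Let A and B be finite-dimensional unital *-algebras with a non-degenerate pairing. Then there exist unique bijective linear maps S_A : A → A and S_B : B → B satisfying ⟨S_A(a)*, b⟩ = conj(⟨a, b*⟩) and ⟨a, S_B(b)*⟩ = conj(⟨a*, b⟩) for all a, b, and these maps are adjoint to each other: ⟨S_A(a), b⟩ = ⟨a, S_B(b)⟩ for all a ∈ A, b ∈ B. -/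
/-!
Since `A` is finite-dimensional, a non-degenerate pairing `β` identifies `A` with the dual of `B`.
The condition on `S_A` says that `β (star (S_A a))` is the conjugate functional
`b ↦ conj (β a (star b))` of `β a`, so `S_A a = star (β⁻¹ (conj-functional of β a))`: a
composite of two linear and two conjugate-linear bijections, hence a linear bijection, and
unique by non-degeneracy. `S_B` is the same construction for the flipped pairing, and
adjointness follows by computing `β (star (S_A a)) (star (S_B b))` in two ways.
-/

open Module

namespace LinearMap

theorem SeparatingLeft.injective {R M N P : Type*} [CommRing R] [AddCommGroup M] [Module R M]
    [AddCommGroup N] [Module R N] [AddCommGroup P] [Module R P] {β : M →ₗ[R] N →ₗ[R] P}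
    (hβ : β.SeparatingLeft) : Function.Injective β :=
  ker_eq_bot.mp (separatingLeft_iff_ker_eq_bot.mp hβ)

variable {R M N : Type*} [CommRing R] [StarRing R]
  [AddCommGroup M] [Module R M] [StarAddMonoid M]
  [AddCommGroup N] [Module R N] [StarAddMonoid N]
  (β : M →ₗ[R] N →ₗ[R] R)

def IsPreantipode (S : M →ₗ[R] M) : Prop :=
  ∀ (a : M) (b : N), β (star (S a)) b = starRingEnd R (β a (star b))

noncomputable def conjDual [StarModule R N] : Dual R N ≃ₗ⋆[R] Dual R N :=
  (WithConv.linearEquiv R (Dual R N)).symm.trans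
    ((starLinearEquiv R).trans (WithConv.linearEquiv R (Dual R N)))

theorem conjDual_apply [StarModule R N] (f : Dual R N) (b : N) :
    conjDual f b = star (f (star b)) :=
  rfl

noncomputable def preantipode [StarModule R M] [StarModule R N] [β.IsPerfPair] : M ≃ₗ[R] M :=
  β.toPerfPair.trans (conjDual.trans (β.toPerfPair.symm.trans (starLinearEquiv R)))

theorem isPreantipode_preantipode [StarModule R M] [StarModule R N] [β.IsPerfPair] :
    IsPreantipode β (preantipode β) := fun a b => by
  simp [preantipode, conjDual_apply, starRingEnd_apply]

variable {β}

theorem IsPreantipode.unique (hβ : β.SeparatingLeft) {S S' : M →ₗ[R] M}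
    (hS : IsPreantipode β S) (hS' : IsPreantipode β S') : S = S' := by
  ext a
  apply star_injective
  apply hβ.injective
  ext b
  rw [hS, hS']

theorem IsPreantipode.apply_eq_apply_flip {SA : M →ₗ[R] M} {SB : N →ₗ[R] N}
    (hSA : IsPreantipode β SA) (hSB : IsPreantipode β.flip SB) (a : M) (b : N) :
    β (SA a) b = β a (SB b) := by
  have h₁ := hSB b (star (SA a))
  have h₂ := hSA a (star (SB b))
  simp only [flip_apply, star_star, starRingEnd_apply] at h₁ h₂
  exact star_injective (h₁.symm.trans h₂)

end LinearMap

open LinearMap in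
theorem exists_unique_preantipodes_general
    {A B : Type*} [Ring A] [Algebra ℂ A] [StarRing A] [StarModule ℂ A]
    [FiniteDimensional ℂ A]
    [Ring B] [Algebra ℂ B] [StarRing B] [StarModule ℂ B]
    (β : A →ₗ[ℂ] B →ₗ[ℂ] ℂ)
    (hβA : ∀ a : A, (∀ b : B, β a b = 0) → a = 0)
    (hβB : ∀ b : B, (∀ a : A, β a b = 0) → b = 0) :
    ∃ SA : A →ₗ[ℂ] A, ∃ SB : B →ₗ[ℂ] B,
      Function.Bijective SA ∧ Function.Bijective SB ∧
      (∀ (a : A) (b : B), β (star (SA a)) b = starRingEnd ℂ (β a (star b))) ∧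
      (∀ (a : A) (b : B), β a (star (SB b)) = starRingEnd ℂ (β (star a) b)) ∧
      (∀ (a : A) (b : B), β (SA a) b = β a (SB b)) ∧
      (∀ SA' : A →ₗ[ℂ] A,
        (∀ (a : A) (b : B), β (star (SA' a)) b = starRingEnd ℂ (β a (star b))) →
          SA' = SA) ∧
      (∀ SB' : B →ₗ[ℂ] B,
        (∀ (a : A) (b : B), β a (star (SB' b)) = starRingEnd ℂ (β (star a) b)) →
          SB' = SB) := by
  have hβA' : β.SeparatingLeft := hβA
  have hβB' : β.flip.SeparatingLeft := flip_separatingLeft.mpr hβB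
  have : β.IsPerfPair := .of_injective hβA'.injective hβB'.injective
  have hSA := isPreantipode_preantipode β
  have hSB := isPreantipode_preantipode β.flip
  exact ⟨preantipode β, preantipode β.flip, (preantipode β).bijective,
    (preantipode β.flip).bijective, hSA, fun a b => hSB b a, hSA.apply_eq_apply_flip hSB,
    fun _ hS => IsPreantipode.unique hβA' hS hSA,
    fun _ hS => IsPreantipode.unique hβB' (fun b a => hS a b) hSB⟩

/-- For a non-degenerate pairing of finite-dimensional unital
*-algebras `A` and `B`, there exist unique bijective linear maps `S_A` and `S_B`
with `⟨(S_A a)*, b⟩ = conj ⟨a, b*⟩` and `⟨a, (S_B b)*⟩ = conj ⟨a*, b⟩`, and these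
maps are adjoint to each other: `⟨S_A a, b⟩ = ⟨a, S_B b⟩`. -/
theorem exists_unique_preantipodes
    {A B : Type*} [Ring A] [Algebra ℂ A] [StarRing A] [StarModule ℂ A]
    [FiniteDimensional ℂ A]
    [Ring B] [Algebra ℂ B] [StarRing B] [StarModule ℂ B]
    [FiniteDimensional ℂ B]
    (β : A →ₗ[ℂ] B →ₗ[ℂ] ℂ)
    (hβA : ∀ a : A, (∀ b : B, β a b = 0) → a = 0)
    (hβB : ∀ b : B, (∀ a : A, β a b = 0) → b = 0) :
    ∃ SA : A →ₗ[ℂ] A, ∃ SB : B →ₗ[ℂ] B,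
      Function.Bijective SA ∧ Function.Bijective SB ∧
      (∀ (a : A) (b : B), β (star (SA a)) b = starRingEnd ℂ (β a (star b))) ∧
      (∀ (a : A) (b : B), β a (star (SB b)) = starRingEnd ℂ (β (star a) b)) ∧
      (∀ (a : A) (b : B), β (SA a) b = β a (SB b)) ∧
      (∀ SA' : A →ₗ[ℂ] A,
        (∀ (a : A) (b : B), β (star (SA' a)) b = starRingEnd ℂ (β a (star b))) →
          SA' = SA) ∧
      (∀ SB' : B →ₗ[ℂ] B,
        (∀ (a : A) (b : B), β a (star (SB' b)) = starRingEnd ℂ (β (star a) b)) →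
          SB' = SB) :=
  exists_unique_preantipodes_general β hβA hβB
end

section
/- For a pairing of *-algebras A and B (i.e., the induced coproducts are *-maps), the maps S on A and B satisfy S(S(b) ▷ a) = S(a) ◁ b and S(S(a) ▷ b) = S(b) ◁ a for all a ∈ A, b ∈ B. -/
/-!
Pair both sides with an arbitrary `b'`: adjointness and anti-multiplicativity give
`⟨S(S b ▷ a), b'⟩ = ⟨a, S b' · S b⟩ = ⟨a, S(b b')⟩ = ⟨S a ◁ b, b'⟩`, and the pairing is
nondegenerate. The second identity is the first one with the roles of `A` and `B` exchanged.
-/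

namespace LinearMap

theorem SeparatingLeft.eq_of_forall_apply_eq {R M N P : Type*} [CommSemiring R]
    [AddCommGroup M] [Module R M] [AddCommMonoid N] [Module R N] [AddCommGroup P] [Module R P]
    {β : M →ₗ[R] N →ₗ[R] P} (hβ : β.SeparatingLeft) {x y : M}
    (hxy : ∀ n, β x n = β y n) : x = y :=
  sub_eq_zero.mp <| hβ _ fun n ↦ by rw [map_sub, sub_apply, hxy, sub_self]

theorem SeparatingLeft.adjoint_dualAction_comm {R M N P : Type*} [CommSemiring R]
    [AddCommGroup M] [Module R M] [Mul N] [AddCommMonoid N] [Module R N]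
    [AddCommGroup P] [Module R P]
    {β : M →ₗ[R] N →ₗ[R] P} (hβ : β.SeparatingLeft) {SM : M → M} {SN : N → N}
    (hadj : ∀ m n, β (SM m) n = β m (SN n)) (hSN : ∀ n n', SN (n * n') = SN n' * SN n)
    {actL : N → M → M} (hL : ∀ m n n', β (actL n m) n' = β m (n' * n))
    {actR : M → N → M} (hR : ∀ m n n', β (actR m n) n' = β m (n * n'))
    (m : M) (n : N) : SM (actL (SN n) m) = actR (SM m) n :=
  hβ.eq_of_forall_apply_eq fun n' ↦ by
    rw [hadj, hL, ← hSN, ← hadj, hR]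

end LinearMap

theorem antipode_action_identities_general
    {A B : Type*} [Ring A] [Algebra ℂ A]
    [Ring B] [Algebra ℂ B]
    (β : A →ₗ[ℂ] B →ₗ[ℂ] ℂ)
    (hβA : ∀ a : A, (∀ b : B, β a b = 0) → a = 0)
    (hβB : ∀ b : B, (∀ a : A, β a b = 0) → b = 0)
    (SA : A →ₗ[ℂ] A) (SB : B →ₗ[ℂ] B)
    -- adjointness
    (hadj : ∀ (a : A) (b : B), β (SA a) b = β a (SB b))
    -- anti-multiplicativity (equivalent to the induced coproducts being *-maps)
    (hSAanti : ∀ a a' : A, SA (a * a') = SA a' * SA a)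
    (hSBanti : ∀ b b' : B, SB (b * b') = SB b' * SB b)
    -- the actions:  b ▷ a,  a ◁ b,  a ▷ b,  b ◁ a
    (actBA : B → A → A)
    (h1 : ∀ (a : A) (b b' : B), β (actBA b a) b' = β a (b' * b))
    (actABr : A → B → A)
    (h2 : ∀ (a : A) (b b' : B), β (actABr a b) b' = β a (b * b'))
    (actAB : A → B → B)
    (h3 : ∀ (a a' : A) (b : B), β a' (actAB a b) = β (a' * a) b)
    (actBAr : B → A → B)
    (h4 : ∀ (a a' : A) (b : B), β a' (actBAr b a) = β (a * a') b) :
    (∀ (a : A) (b : B), SA (actBA (SB b) a) = actABr (SA a) b) ∧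
    (∀ (a : A) (b : B), SB (actAB (SA a) b) = actBAr (SB b) a) := by
  refine ⟨LinearMap.SeparatingLeft.adjoint_dualAction_comm hβA hadj hSBanti h1 h2,
    fun a b ↦ ?_⟩
  exact (LinearMap.flip_separatingLeft.mpr hβB).adjoint_dualAction_comm (β := β.flip)
    (fun b a ↦ (hadj a b).symm) hSAanti (fun b a a' ↦ h3 a a' b) (fun b a a' ↦ h4 a a' b) b a

/-- For a pairing of finite-dimensional unital *-algebras (with
pre-antipodes `S_A`, `S_B` which are anti-multiplicative and adjoint to each
other, as happens when the induced coproducts are *-maps), the identities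
`S(S(b) ▷ a) = S(a) ◁ b` and `S(S(a) ▷ b) = S(b) ◁ a` hold. -/
theorem antipode_action_identities
    {A B : Type*} [Ring A] [Algebra ℂ A] [StarRing A] [StarModule ℂ A]
    [FiniteDimensional ℂ A]
    [Ring B] [Algebra ℂ B] [StarRing B] [StarModule ℂ B]
    [FiniteDimensional ℂ B]
    (β : A →ₗ[ℂ] B →ₗ[ℂ] ℂ)
    (hβA : ∀ a : A, (∀ b : B, β a b = 0) → a = 0)
    (hβB : ∀ b : B, (∀ a : A, β a b = 0) → b = 0)
    (SA : A →ₗ[ℂ] A) (SB : B →ₗ[ℂ] B)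
    -- the defining relations of the pre-antipodes coming from the involutions
    (hSAstar : ∀ (a : A) (b : B), β (star (SA a)) b = starRingEnd ℂ (β a (star b)))
    (hSBstar : ∀ (a : A) (b : B), β a (star (SB b)) = starRingEnd ℂ (β (star a) b))
    -- adjointness
    (hadj : ∀ (a : A) (b : B), β (SA a) b = β a (SB b))
    -- anti-multiplicativity (equivalent to the induced coproducts being *-maps)
    (hSAanti : ∀ a a' : A, SA (a * a') = SA a' * SA a)
    (hSBanti : ∀ b b' : B, SB (b * b') = SB b' * SB b)
    -- the actions:  b ▷ a,  a ◁ b,  a ▷ b,  b ◁ a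
    (actBA : B → A → A)
    (h1 : ∀ (a : A) (b b' : B), β (actBA b a) b' = β a (b' * b))
    (actABr : A → B → A)
    (h2 : ∀ (a : A) (b b' : B), β (actABr a b) b' = β a (b * b'))
    (actAB : A → B → B)
    (h3 : ∀ (a a' : A) (b : B), β a' (actAB a b) = β (a' * a) b)
    (actBAr : B → A → B)
    (h4 : ∀ (a a' : A) (b : B), β a' (actBAr b a) = β (a * a') b) :
    (∀ (a : A) (b : B), SA (actBA (SB b) a) = actABr (SA a) b) ∧
    (∀ (a : A) (b : B), SB (actAB (SA a) b) = actBAr (SB b) a) :=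
  antipode_action_identities_general β hβA hβB SA SB hadj hSAanti hSBanti actBA h1 actABr h2 actAB
    h3 actBAr h4
end

section
/- Let A be a finite-dimensional unital algebra with coassociative coproduct Δ admitting a counit ε, and let φ be a faithful left integral on A with associated map S (i.e., S((ι ⊗ φ)(Δ(a)(1 ⊗ c))) = (ι ⊗ φ)((1 ⊗ a)Δ(c)) for all a, c). Then S is unique and bijective, and its adjoint on the dual algebra B is an anti-homomorphism (equivalently, S flips the coproduct on A). -/
/-!
Dualise the defining relation of `S`. In the dual algebra `B`, with product
`(ω ⋆ η)(a) = (ω ⊗ η)(Δ a)`, write `φ_c = φ(· c)` and `ᶜφ_a = φ(a ·)`; the relation becomes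
`((ω ∘ S) ⋆ φ_c)(a) = (ω ⋆ ᶜφ_a)(c)`. By faithfulness and finite dimension, `c ↦ φ_c` and
`a ↦ ᶜφ_a` are bijections `A → B`, so whenever `ω ⋆ ᶜφ_a = ᶜφ_b` we get
`((ω ∘ S) ⋆ θ)(a) = θ(b)` for every `θ ∈ B`, and in particular `ω (S a) = ε b`.
Since `b` depends only on `Δ`, `φ`, `ω` and `a`, this pins `S` down. If `ω ∘ S = 0` then every
such `b` vanishes, so `ω ⋆ ᶜφ_a = 0` for all `a`, and hence `ω = ω ⋆ ε = 0`; thus `S` is onto.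
Associativity of `⋆` turns the same formula into `(ω ⋆ η) ∘ S = (η ∘ S) ⋆ (ω ∘ S)`, and since
the functionals `ω ⊗ η` separate the points of `A ⊗ A`, this is the flip `Δ ∘ S = τ (S ⊗ S) Δ`.
-/

open TensorProduct

/-- `(ε ⊗ ι)` as a map `A ⊗ A → A`. -/
noncomputable def lmapC {A : Type*} [AddCommGroup A] [Module ℂ A]
    (ε : A →ₗ[ℂ] ℂ) : A ⊗[ℂ] A →ₗ[ℂ] A :=
  (TensorProduct.lid ℂ A).toLinearMap ∘ₗ TensorProduct.map ε LinearMap.id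

/-- `(ι ⊗ ε)` as a map `A ⊗ A → A`. -/
noncomputable def rmapC {A : Type*} [AddCommGroup A] [Module ℂ A]
    (ε : A →ₗ[ℂ] ℂ) : A ⊗[ℂ] A →ₗ[ℂ] A :=
  (TensorProduct.rid ℂ A).toLinearMap ∘ₗ TensorProduct.map LinearMap.id ε

namespace TensorProduct

section

variable {R M N P M' N' : Type*} [CommSemiring R]
  [AddCommMonoid M] [AddCommMonoid N] [AddCommMonoid P] [AddCommMonoid M'] [AddCommMonoid N']
  [Module R M] [Module R N] [Module R P] [Module R M'] [Module R N']

lemma dualDistrib_tmul_comp_map (f : Module.Dual R M) (g : Module.Dual R N)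
    (u : M' →ₗ[R] M) (v : N' →ₗ[R] N) :
    dualDistrib R M N (f ⊗ₜ g) ∘ₗ map u v = dualDistrib R M' N' ((f ∘ₗ u) ⊗ₜ (g ∘ₗ v)) :=
  ext' fun _ _ => rfl

lemma dualDistrib_tmul_dualDistrib (f : Module.Dual R M) (g : Module.Dual R N)
    (h : Module.Dual R P) :
    dualDistrib R (M ⊗[R] N) P (dualDistrib R M N (f ⊗ₜ g) ⊗ₜ h) =
      dualDistrib R M (N ⊗[R] P) (f ⊗ₜ dualDistrib R N P (g ⊗ₜ h)) ∘ₗ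
        (TensorProduct.assoc R M N P).toLinearMap :=
  ext_threefold fun _ _ _ => by simp [mul_assoc]

lemma dualDistrib_tmul_eq_comp_rid (f : Module.Dual R M) (g : Module.Dual R N) :
    dualDistrib R M N (f ⊗ₜ g) = f ∘ₗ (TensorProduct.rid R M).toLinearMap ∘ₗ map LinearMap.id g :=
  ext' fun _ _ => by simp [mul_comm]

end

section

variable {R M N : Type*} [CommRing R] [AddCommGroup M] [AddCommGroup N] [Module R M] [Module R N]
  [Module.Free R M] [Module.Finite R M] [Module.Free R N] [Module.Finite R N]

lemma ext_of_dualDistrib_tmul {t t' : M ⊗[R] N}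
    (h : ∀ f g, dualDistrib R M N (f ⊗ₜ g) t = dualDistrib R M N (f ⊗ₜ g) t') : t = t' := by
  refine Module.eval_apply_injective R (LinearMap.ext fun F => ?_)
  obtain ⟨G, rfl⟩ := (dualDistribEquiv R M N).surjective F
  have h' : (LinearMap.applyₗ t).comp (dualDistrib R M N) =
      (LinearMap.applyₗ t').comp (dualDistrib R M N) := ext' h
  exact LinearMap.congr_fun h' G

end

end TensorProduct

section Convolution

variable {R M : Type*} [CommSemiring R] [AddCommMonoid M] [Module R M]

/-- The product `ω ⋆ η` of the dual algebra `B`. -/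
noncomputable def dualConv (Δ : M →ₗ[R] M ⊗[R] M) (ω η : Module.Dual R M) : Module.Dual R M :=
  dualDistrib R M M (ω ⊗ₜ η) ∘ₗ Δ

lemma dualConv_apply (Δ : M →ₗ[R] M ⊗[R] M) (ω η : Module.Dual R M) (a : M) :
    dualConv Δ ω η a = dualDistrib R M M (ω ⊗ₜ η) (Δ a) := rfl

lemma dualConv_assoc {Δ : M →ₗ[R] M ⊗[R] M}
    (hΔ : ∀ a, TensorProduct.assoc R M M M (map Δ LinearMap.id (Δ a)) = map LinearMap.id Δ (Δ a))
    (ω η θ : Module.Dual R M) :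
    dualConv Δ (dualConv Δ ω η) θ = dualConv Δ ω (dualConv Δ η θ) := by
  ext a
  calc dualConv Δ (dualConv Δ ω η) θ a
      = dualDistrib R (M ⊗[R] M) M (dualDistrib R M M (ω ⊗ₜ η) ⊗ₜ θ)
          (map Δ LinearMap.id (Δ a)) :=
        (LinearMap.congr_fun (dualDistrib_tmul_comp_map _ θ Δ LinearMap.id) (Δ a)).symm
    _ = dualDistrib R M (M ⊗[R] M) (ω ⊗ₜ dualDistrib R M M (η ⊗ₜ θ))
          (map LinearMap.id Δ (Δ a)) := by
        rw [dualDistrib_tmul_dualDistrib, LinearMap.comp_apply, LinearEquiv.coe_coe, hΔ]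
    _ = dualConv Δ ω (dualConv Δ η θ) a :=
        LinearMap.congr_fun (dualDistrib_tmul_comp_map ω _ LinearMap.id Δ) (Δ a)

lemma dualConv_counit {Δ : M →ₗ[R] M ⊗[R] M} {ε : Module.Dual R M}
    (hε : ∀ a, TensorProduct.rid R M (map LinearMap.id ε (Δ a)) = a) (ω : Module.Dual R M) :
    dualConv Δ ω ε = ω := by
  ext a
  rw [dualConv_apply, dualDistrib_tmul_eq_comp_rid]
  exact congrArg ω (hε a)

end Convolution

section Faithful

variable {K A : Type*} [Field K] [Ring A] [Algebra K A]

noncomputable def dualMulLeft (φ : Module.Dual K A) : A →ₗ[K] Module.Dual K A :=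
  LinearMap.llcomp K A A K φ ∘ₗ LinearMap.mul K A

noncomputable def dualMulRight (φ : Module.Dual K A) : A →ₗ[K] Module.Dual K A :=
  LinearMap.llcomp K A A K φ ∘ₗ (LinearMap.mul K A).flip

@[simp] lemma dualMulLeft_apply (φ : Module.Dual K A) (a c : A) :
    dualMulLeft φ a c = φ (a * c) := rfl

@[simp] lemma dualMulRight_apply (φ : Module.Dual K A) (c a : A) :
    dualMulRight φ c a = φ (a * c) := rfl

variable [FiniteDimensional K A] {φ : Module.Dual K A}

lemma dualMulLeft_surjective (hφ : ∀ a : A, (∀ c : A, φ (a * c) = 0) → a = 0) :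
    Function.Surjective (dualMulLeft φ) :=
  (LinearMap.injective_iff_surjective_of_finrank_eq_finrank Subspace.dual_finrank_eq.symm).mp <|
    (injective_iff_map_eq_zero _).mpr fun a ha => hφ a fun c => LinearMap.congr_fun ha c

lemma dualMulRight_surjective (hφ : ∀ c : A, (∀ a : A, φ (a * c) = 0) → c = 0) :
    Function.Surjective (dualMulRight φ) :=
  (LinearMap.injective_iff_surjective_of_finrank_eq_finrank Subspace.dual_finrank_eq.symm).mp <|
    (injective_iff_map_eq_zero _).mpr fun c hc => hφ c fun a => LinearMap.congr_fun hc a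

end Faithful

section Antipode

variable {A : Type*} [Ring A] [Algebra ℂ A]

lemma apply_rmapC_mul_one_tmul (φ ω : Module.Dual ℂ A) (t : A ⊗[ℂ] A) (c : A) :
    ω (rmapC φ (t * ((1 : A) ⊗ₜ c))) = dualDistrib ℂ A A (ω ⊗ₜ dualMulRight φ c) t := by
  have h : ω ∘ₗ rmapC φ ∘ₗ LinearMap.mulRight ℂ ((1 : A) ⊗ₜ[ℂ] c) =
      dualDistrib ℂ A A (ω ⊗ₜ dualMulRight φ c) :=
    ext' fun x y => by simp [rmapC, mul_comm]
  exact LinearMap.congr_fun h t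

lemma apply_rmapC_one_tmul_mul (φ ω : Module.Dual ℂ A) (a : A) (t : A ⊗[ℂ] A) :
    ω (rmapC φ (((1 : A) ⊗ₜ a) * t)) = dualDistrib ℂ A A (ω ⊗ₜ dualMulLeft φ a) t := by
  have h : ω ∘ₗ rmapC φ ∘ₗ LinearMap.mulLeft ℂ ((1 : A) ⊗ₜ[ℂ] a) =
      dualDistrib ℂ A A (ω ⊗ₜ dualMulLeft φ a) :=
    ext' fun x y => by simp [rmapC, mul_comm]
  exact LinearMap.congr_fun h t

def IsAntipodeFor (Δ : A →ₗ[ℂ] A ⊗[ℂ] A) (φ : Module.Dual ℂ A) (S : A →ₗ[ℂ] A) : Prop :=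
  ∀ a c : A, S (rmapC φ (Δ a * ((1 : A) ⊗ₜ[ℂ] c))) = rmapC φ (((1 : A) ⊗ₜ[ℂ] a) * Δ c)

namespace IsAntipodeFor

variable {Δ : A →ₗ[ℂ] A ⊗[ℂ] A} {φ ε : Module.Dual ℂ A} {S : A →ₗ[ℂ] A}

lemma dualConv_comp_dualMulRight (hS : IsAntipodeFor Δ φ S) (ω : Module.Dual ℂ A) (a c : A) :
    dualConv Δ (ω ∘ₗ S) (dualMulRight φ c) a = dualConv Δ ω (dualMulLeft φ a) c := by
  rw [dualConv_apply, dualConv_apply, ← apply_rmapC_mul_one_tmul, ← apply_rmapC_one_tmul_mul,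
    LinearMap.comp_apply, hS]

variable [FiniteDimensional ℂ A]

lemma dualConv_comp_apply (hS : IsAntipodeFor Δ φ S)
    (hφ : ∀ c : A, (∀ a : A, φ (a * c) = 0) → c = 0) {ω : Module.Dual ℂ A} {a b : A}
    (hb : dualMulLeft φ b = dualConv Δ ω (dualMulLeft φ a)) (θ : Module.Dual ℂ A) :
    dualConv Δ (ω ∘ₗ S) θ a = θ b := by
  obtain ⟨c, rfl⟩ := dualMulRight_surjective hφ θ
  rw [hS.dualConv_comp_dualMulRight, ← hb]
  rfl

lemma comp_apply_eq_counit (hS : IsAntipodeFor Δ φ S)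
    (hφ : ∀ c : A, (∀ a : A, φ (a * c) = 0) → c = 0)
    (hε : ∀ a, TensorProduct.rid ℂ A (map LinearMap.id ε (Δ a)) = a) {ω : Module.Dual ℂ A}
    {a b : A} (hb : dualMulLeft φ b = dualConv Δ ω (dualMulLeft φ a)) :
    (ω ∘ₗ S) a = ε b := by
  rw [← hS.dualConv_comp_apply hφ hb ε, dualConv_counit hε]

theorem unique {S' : A →ₗ[ℂ] A} (hS : IsAntipodeFor Δ φ S) (hS' : IsAntipodeFor Δ φ S')
    (hφ₁ : ∀ a : A, (∀ c : A, φ (a * c) = 0) → a = 0)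
    (hφ₂ : ∀ c : A, (∀ a : A, φ (a * c) = 0) → c = 0)
    (hε : ∀ a, TensorProduct.rid ℂ A (map LinearMap.id ε (Δ a)) = a) : S = S' := by
  ext a
  refine Module.eval_apply_injective ℂ (LinearMap.ext fun ω => ?_)
  obtain ⟨b, hb⟩ := dualMulLeft_surjective hφ₁ (dualConv Δ ω (dualMulLeft φ a))
  exact (hS.comp_apply_eq_counit hφ₂ hε hb).trans (hS'.comp_apply_eq_counit hφ₂ hε hb).symm

theorem surjective (hS : IsAntipodeFor Δ φ S)
    (hφ₁ : ∀ a : A, (∀ c : A, φ (a * c) = 0) → a = 0)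
    (hφ₂ : ∀ c : A, (∀ a : A, φ (a * c) = 0) → c = 0)
    (hε : ∀ a, TensorProduct.rid ℂ A (map LinearMap.id ε (Δ a)) = a) :
    Function.Surjective S := by
  refine LinearMap.dualMap_injective_iff.mp ((injective_iff_map_eq_zero _).mpr fun ω hω => ?_)
  have hω_conv : ∀ a, dualConv Δ ω (dualMulLeft φ a) = 0 := fun a => by
    obtain ⟨b, hb⟩ := dualMulLeft_surjective hφ₁ (dualConv Δ ω (dualMulLeft φ a))
    have hb₀ : b = 0 := (Module.forall_dual_apply_eq_zero_iff ℂ b).mp fun θ => by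
      rw [← hS.dualConv_comp_apply hφ₂ hb θ]
      simp [show ω ∘ₗ S = 0 from hω, dualConv_apply]
    rw [← hb, hb₀, map_zero]
  obtain ⟨e, he⟩ := dualMulLeft_surjective hφ₁ ε
  rw [← dualConv_counit hε ω, ← he, hω_conv]

theorem dualConv_comp (hS : IsAntipodeFor Δ φ S)
    (hΔ : ∀ a, TensorProduct.assoc ℂ A A A (map Δ LinearMap.id (Δ a)) = map LinearMap.id Δ (Δ a))
    (hφ₁ : ∀ a : A, (∀ c : A, φ (a * c) = 0) → a = 0)
    (hφ₂ : ∀ c : A, (∀ a : A, φ (a * c) = 0) → c = 0)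
    (hε : ∀ a, TensorProduct.rid ℂ A (map LinearMap.id ε (Δ a)) = a) (ω η : Module.Dual ℂ A) :
    dualConv Δ ω η ∘ₗ S = dualConv Δ (η ∘ₗ S) (ω ∘ₗ S) := by
  ext a
  obtain ⟨b, hb⟩ := dualMulLeft_surjective hφ₁ (dualConv Δ η (dualMulLeft φ a))
  obtain ⟨b', hb'⟩ := dualMulLeft_surjective hφ₁ (dualConv Δ ω (dualMulLeft φ b))
  have hab' : dualMulLeft φ b' = dualConv Δ (dualConv Δ ω η) (dualMulLeft φ a) := by
    rw [hb', hb, dualConv_assoc hΔ]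
  calc (dualConv Δ ω η ∘ₗ S) a
      = ε b' := hS.comp_apply_eq_counit hφ₂ hε hab'
    _ = (ω ∘ₗ S) b := (hS.comp_apply_eq_counit hφ₂ hε hb').symm
    _ = dualConv Δ (η ∘ₗ S) (ω ∘ₗ S) a := (hS.dualConv_comp_apply hφ₂ hb _).symm

theorem comul_apply (hS : IsAntipodeFor Δ φ S)
    (hΔ : ∀ a, TensorProduct.assoc ℂ A A A (map Δ LinearMap.id (Δ a)) = map LinearMap.id Δ (Δ a))
    (hφ₁ : ∀ a : A, (∀ c : A, φ (a * c) = 0) → a = 0)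
    (hφ₂ : ∀ c : A, (∀ a : A, φ (a * c) = 0) → c = 0)
    (hε : ∀ a, TensorProduct.rid ℂ A (map LinearMap.id ε (Δ a)) = a) (a : A) :
    Δ (S a) = TensorProduct.comm ℂ A A (map S S (Δ a)) := by
  refine ext_of_dualDistrib_tmul fun ω η => ?_
  rw [dualDistrib_apply_comm, comm_tmul]
  exact (LinearMap.congr_fun (hS.dualConv_comp hΔ hφ₁ hφ₂ hε ω η) a).trans
    (LinearMap.congr_fun (dualDistrib_tmul_comp_map η ω S S) (Δ a)).symm

end IsAntipodeFor

end Antipode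

theorem antipode_of_faithful_left_integral_unique_bijective_flips_general
    {A : Type*} [Ring A] [Algebra ℂ A] [FiniteDimensional ℂ A]
    (Δ : A →ₗ[ℂ] A ⊗[ℂ] A)
    (hcoassoc : ∀ a : A,
      (TensorProduct.assoc ℂ A A A) (TensorProduct.map Δ LinearMap.id (Δ a)) =
        TensorProduct.map LinearMap.id Δ (Δ a))
    (ε : A →ₗ[ℂ] ℂ)
    (hε₂ : ∀ a : A, rmapC ε (Δ a) = a)
    (φ : A →ₗ[ℂ] ℂ)
    (hφ₁ : ∀ a : A, (∀ c : A, φ (a * c) = 0) → a = 0)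
    (hφ₂ : ∀ c : A, (∀ a : A, φ (a * c) = 0) → c = 0)
    (S : A →ₗ[ℂ] A)
    (hS : ∀ a c : A,
      S (rmapC φ (Δ a * ((1 : A) ⊗ₜ[ℂ] c))) = rmapC φ (((1 : A) ⊗ₜ[ℂ] a) * Δ c)) :
    Function.Bijective S ∧
    (∀ S' : A →ₗ[ℂ] A,
      (∀ a c : A,
        S' (rmapC φ (Δ a * ((1 : A) ⊗ₜ[ℂ] c))) = rmapC φ (((1 : A) ⊗ₜ[ℂ] a) * Δ c)) →
      S' = S) ∧
    (∀ a : A, Δ (S a) = (TensorProduct.comm ℂ A A) (TensorProduct.map S S (Δ a))) := by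
  have hS_surj : Function.Surjective S := IsAntipodeFor.surjective hS hφ₁ hφ₂ hε₂
  exact ⟨⟨LinearMap.injective_iff_surjective.mpr hS_surj, hS_surj⟩,
    fun S' hS' => IsAntipodeFor.unique hS' hS hφ₁ hφ₂ hε₂,
    IsAntipodeFor.comul_apply hS hcoassoc hφ₁ hφ₂ hε₂⟩

/-- For a finite-dimensional unital ℂ-algebra `A` with coassociative
coproduct `Δ` and counit `ε`, and a faithful left integral `φ` with associated map
`S` (i.e. `S((ι ⊗ φ)(Δ(a)(1 ⊗ c))) = (ι ⊗ φ)((1 ⊗ a)Δ(c))`), the map `S` is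
unique, bijective, and flips the coproduct (equivalently, its adjoint on the dual
algebra is an anti-homomorphism). -/
theorem antipode_of_faithful_left_integral_unique_bijective_flips
    {A : Type*} [Ring A] [Algebra ℂ A] [FiniteDimensional ℂ A]
    (Δ : A →ₗ[ℂ] A ⊗[ℂ] A)
    (hcoassoc : ∀ a : A,
      (TensorProduct.assoc ℂ A A A) (TensorProduct.map Δ LinearMap.id (Δ a)) =
        TensorProduct.map LinearMap.id Δ (Δ a))
    (ε : A →ₗ[ℂ] ℂ)
    (hε₁ : ∀ a : A, lmapC ε (Δ a) = a)
    (hε₂ : ∀ a : A, rmapC ε (Δ a) = a)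
    (φ : A →ₗ[ℂ] ℂ)
    (hφ₁ : ∀ a : A, (∀ c : A, φ (a * c) = 0) → a = 0)
    (hφ₂ : ∀ c : A, (∀ a : A, φ (a * c) = 0) → c = 0)
    (S : A →ₗ[ℂ] A)
    (hS : ∀ a c : A,
      S (rmapC φ (Δ a * ((1 : A) ⊗ₜ[ℂ] c))) = rmapC φ (((1 : A) ⊗ₜ[ℂ] a) * Δ c)) :
    Function.Bijective S ∧
    (∀ S' : A →ₗ[ℂ] A,
      (∀ a c : A,
        S' (rmapC φ (Δ a * ((1 : A) ⊗ₜ[ℂ] c))) = rmapC φ (((1 : A) ⊗ₜ[ℂ] a) * Δ c)) →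
      S' = S) ∧
    (∀ a : A, Δ (S a) = (TensorProduct.comm ℂ A A) (TensorProduct.map S S (Δ a))) :=
  antipode_of_faithful_left_integral_unique_bijective_flips_general Δ hcoassoc ε hε₂ φ hφ₁ hφ₂ S hS
end

section
/- Let A be a finite-dimensional unital algebra with coproduct Δ admitting a counit. If there exists a non-zero left invariant linear functional φ on A (i.e., (ι ⊗ φ)Δ(a) = φ(a)·1 for all a), then Δ(1) = 1 ⊗ 1. -/
/-!
Apply `ι ⊗ ι ⊗ φ` to coassociativity `(Δ ⊗ ι) Δ a = (ι ⊗ Δ) Δ a`. On the left, slicing the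
last leg commutes with `Δ` on the first, so left invariance gives `φ(a) Δ(1)`; on the right it
acts on the second factor `Δ`, giving `φ(a) 1 ⊗ 1`. Cancelling `φ(a) ≠ 0` yields `Δ(1) = 1 ⊗ 1`.
-/

open TensorProduct

open TensorProduct (assoc rid)

section Slicing

variable {R M N P : Type*} [CommSemiring R] [AddCommMonoid M] [AddCommMonoid N]
  [AddCommMonoid P] [Module R M] [Module R N] [Module R P]

lemma lTensor_rid_comp_lTensor_comp_assoc (φ : P →ₗ[R] R) :
    ((rid R N).toLinearMap ∘ₗ φ.lTensor N).lTensor M ∘ₗ (assoc R M N P).toLinearMap =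
      (rid R (M ⊗[R] N)).toLinearMap ∘ₗ φ.lTensor (M ⊗[R] N) := by
  ext m n p
  simp

lemma rid_comp_lTensor_comp_rTensor (f : M →ₗ[R] N) (φ : P →ₗ[R] R) :
    (rid R N).toLinearMap ∘ₗ φ.lTensor N ∘ₗ f.rTensor P =
      f ∘ₗ (rid R M).toLinearMap ∘ₗ φ.lTensor M := by
  ext m p
  simp

lemma lTensor_smulRight (φ : P →ₗ[R] R) (e : M) :
    (φ.smulRight e).lTensor N =
      (TensorProduct.mk R N M).flip e ∘ₗ (rid R N).toLinearMap ∘ₗ φ.lTensor N := by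
  ext n p
  simp [smul_tmul']

end Slicing

theorem comul_eq_tmul_self_of_lTensor_comp_comul_eq_smulRight {K M : Type*} [Field K]
    [AddCommGroup M] [Module K M] (Δ : M →ₗ[K] M ⊗[K] M)
    (hcoassoc : (assoc K M M M).toLinearMap ∘ₗ Δ.rTensor M ∘ₗ Δ = Δ.lTensor M ∘ₗ Δ)
    (φ : M →ₗ[K] K) (hφ : φ ≠ 0) (e : M)
    (hinv : (rid K M).toLinearMap ∘ₗ φ.lTensor M ∘ₗ Δ = φ.smulRight e) :
    Δ e = e ⊗ₜ e := by
  obtain ⟨a, ha⟩ := DFunLike.ne_iff.mp hφ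
  set slice := ((rid K M).toLinearMap ∘ₗ φ.lTensor M).lTensor M
  have hleft : slice (assoc K M M M (Δ.rTensor M (Δ a))) = φ a • Δ e := by
    calc slice (assoc K M M M (Δ.rTensor M (Δ a)))
        = rid K (M ⊗[K] M) (φ.lTensor (M ⊗[K] M) (Δ.rTensor M (Δ a))) :=
          LinearMap.congr_fun (lTensor_rid_comp_lTensor_comp_assoc φ) _
      _ = Δ (rid K M (φ.lTensor M (Δ a))) :=
          LinearMap.congr_fun (rid_comp_lTensor_comp_rTensor Δ φ) _
      _ = φ a • Δ e := by rw [← map_smul]; exact congrArg Δ (LinearMap.congr_fun hinv a)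
  have hright : slice (Δ.lTensor M (Δ a)) = φ a • (e ⊗ₜ e) := by
    calc slice (Δ.lTensor M (Δ a))
        = (φ.smulRight e).lTensor M (Δ a) := by
          rw [← hinv]; simp only [slice, LinearMap.lTensor_comp, LinearMap.comp_apply]
      _ = rid K M (φ.lTensor M (Δ a)) ⊗ₜ e :=
          LinearMap.congr_fun (lTensor_smulRight φ e) _
      _ = φ a • (e ⊗ₜ e) := by
          rw [smul_tmul']; exact congrArg (· ⊗ₜ e) (LinearMap.congr_fun hinv a)
  have hsliced := congrArg slice (LinearMap.congr_fun hcoassoc a)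
  exact smul_right_injective _ ha (hleft.symm.trans (hsliced.trans hright))

theorem coprod_unital_of_left_invariant_general
    {A : Type*} [Ring A] [Algebra ℂ A]
    (Δ : A →ₗ[ℂ] A ⊗[ℂ] A)
    (hcoassoc : ∀ a : A,
      (TensorProduct.assoc ℂ A A A) (TensorProduct.map Δ LinearMap.id (Δ a)) =
        TensorProduct.map LinearMap.id Δ (Δ a))
    (φ : A →ₗ[ℂ] ℂ) (hφ : φ ≠ 0)
    (hinv : ∀ a : A, rmapC φ (Δ a) = φ a • (1 : A)) :
    Δ 1 = (1 : A) ⊗ₜ[ℂ] (1 : A) :=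
  comul_eq_tmul_self_of_lTensor_comp_comul_eq_smulRight Δ (LinearMap.ext hcoassoc) φ hφ 1
    (LinearMap.ext hinv)

/-- If a finite-dimensional unital ℂ-algebra `A` with coassociative
coproduct `Δ` admitting a counit `ε` has a non-zero left invariant functional `φ`
(i.e. `(ι ⊗ φ)(Δ a) = φ(a)·1`), then `Δ 1 = 1 ⊗ 1`. -/
theorem coprod_unital_of_left_invariant
    {A : Type*} [Ring A] [Algebra ℂ A] [FiniteDimensional ℂ A]
    (Δ : A →ₗ[ℂ] A ⊗[ℂ] A)
    (hcoassoc : ∀ a : A,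
      (TensorProduct.assoc ℂ A A A) (TensorProduct.map Δ LinearMap.id (Δ a)) =
        TensorProduct.map LinearMap.id Δ (Δ a))
    (ε : A →ₗ[ℂ] ℂ)
    (hε₁ : ∀ a : A, lmapC ε (Δ a) = a)
    (hε₂ : ∀ a : A, rmapC ε (Δ a) = a)
    (φ : A →ₗ[ℂ] ℂ) (hφ : φ ≠ 0)
    (hinv : ∀ a : A, rmapC φ (Δ a) = φ a • (1 : A)) :
    Δ 1 = (1 : A) ⊗ₜ[ℂ] (1 : A) :=
  coprod_unital_of_left_invariant_general Δ hcoassoc φ hφ hinv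
end

section
/- Let A be a finite-dimensional unital algebra with coproduct Δ admitting a counit ε, and let φ be a faithful left integral on A with antipode S satisfying S(1) = 1. Then every left invariant functional φ' on A is a scalar multiple of φ. -/
open TensorProduct

/-!
Faithfulness of `φ` and finite dimensionality make `c ↦ φ(· c)` a linear isomorphism
`A ≃ A*`, so `φ' = φ(· x)` for some `x`. The antipode identity turns left invariance of
`φ'` into `(ι ⊗ φ)((1 ⊗ a) Δ(x)) = φ'(a) 1 = (ι ⊗ φ)((1 ⊗ a)(1 ⊗ x))` for all `a`, and
faithfulness again forces `Δ(x) = 1 ⊗ x`. Applying the counit gives `x = ε(x) 1`, hence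
`φ' = ε(x) φ`.
-/

lemma rmapC_tmul {A : Type*} [AddCommGroup A] [Module ℂ A]
    (f : A →ₗ[ℂ] ℂ) (x y : A) : rmapC f (x ⊗ₜ[ℂ] y) = f y • x := by
  simp [rmapC]

section Faithful

variable {A : Type*} [Ring A] [Algebra ℂ A]

noncomputable def rightDual (φ : A →ₗ[ℂ] ℂ) : A →ₗ[ℂ] Module.Dual ℂ A :=
  (LinearMap.mul ℂ A).flip.compr₂ φ

@[simp]
lemma rightDual_apply (φ : A →ₗ[ℂ] ℂ) (c a : A) : rightDual φ c a = φ (a * c) := rfl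

lemma rightDual_injective {φ : A →ₗ[ℂ] ℂ}
    (hφ : ∀ c : A, (∀ a : A, φ (a * c) = 0) → c = 0) :
    Function.Injective (rightDual φ) := by
  rw [← LinearMap.ker_eq_bot, LinearMap.ker_eq_bot']
  exact fun c hc => hφ c fun a => LinearMap.congr_fun hc a

lemma exists_comp_mulRight_eq [FiniteDimensional ℂ A] {φ : A →ₗ[ℂ] ℂ}
    (hφ : ∀ c : A, (∀ a : A, φ (a * c) = 0) → c = 0) (ψ : Module.Dual ℂ A) :
    ∃ x : A, φ ∘ₗ LinearMap.mulRight ℂ x = ψ :=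
  (LinearMap.injective_iff_surjective_of_finrank_eq_finrank
    (Subspace.dual_finrank_eq (K := ℂ) (V := A)).symm).mp (rightDual_injective hφ) ψ

lemma rmapC_mul_one_tmul (φ : A →ₗ[ℂ] ℂ) (x : A) (w : A ⊗[ℂ] A) :
    rmapC φ (w * ((1 : A) ⊗ₜ[ℂ] x)) = rmapC (φ ∘ₗ LinearMap.mulRight ℂ x) w := by
  induction w using TensorProduct.induction_on with
  | zero => simp
  | tmul p q => simp [rmapC_tmul, Algebra.TensorProduct.tmul_mul_tmul]
  | add u v hu hv => rw [add_mul, map_add, map_add, hu, hv]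

lemma dualTensorHom_lTensor_rightDual_apply (φ : A →ₗ[ℂ] ℂ) (w : A ⊗[ℂ] A) (a : A) :
    dualTensorHom ℂ A A (TensorProduct.comm ℂ A _ (LinearMap.lTensor A (rightDual φ) w)) a =
      rmapC φ (((1 : A) ⊗ₜ[ℂ] a) * w) := by
  induction w using TensorProduct.induction_on with
  | zero => simp
  | tmul p q => simp [rmapC_tmul, Algebra.TensorProduct.tmul_mul_tmul]
  | add u v hu hv => simp only [map_add, LinearMap.add_apply, mul_add, hu, hv]

lemma eq_of_rmapC_one_tmul_mul [FiniteDimensional ℂ A] {φ : A →ₗ[ℂ] ℂ}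
    (hφ : ∀ c : A, (∀ a : A, φ (a * c) = 0) → c = 0) {v w : A ⊗[ℂ] A}
    (h : ∀ a : A, rmapC φ (((1 : A) ⊗ₜ[ℂ] a) * v) = rmapC φ (((1 : A) ⊗ₜ[ℂ] a) * w)) :
    v = w := by
  have hinj : Function.Injective fun w : A ⊗[ℂ] A =>
      dualTensorHom ℂ A A (TensorProduct.comm ℂ A _ (LinearMap.lTensor A (rightDual φ) w)) :=
    (dualTensorHomEquiv ℂ A A).injective.comp ((TensorProduct.comm ℂ A _).injective.comp
      (Module.Flat.lTensor_preserves_injective_linearMap _ (rightDual_injective hφ)))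
  refine hinj (LinearMap.ext fun a => ?_)
  simpa only [dualTensorHom_lTensor_rightDual_apply] using h a

end Faithful

theorem left_invariant_unique_up_to_scalar_general
    {A : Type*} [Ring A] [Algebra ℂ A] [FiniteDimensional ℂ A]
    (Δ : A →ₗ[ℂ] A ⊗[ℂ] A)
    (ε : A →ₗ[ℂ] ℂ)
    (hε₂ : ∀ a : A, rmapC ε (Δ a) = a)
    (φ : A →ₗ[ℂ] ℂ)
    (hφ₂ : ∀ c : A, (∀ a : A, φ (a * c) = 0) → c = 0)
    (S : A →ₗ[ℂ] A)
    (hS : ∀ a c : A,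
      S (rmapC φ (Δ a * ((1 : A) ⊗ₜ[ℂ] c))) = rmapC φ (((1 : A) ⊗ₜ[ℂ] a) * Δ c))
    (hS1 : S 1 = 1)
    (φ' : A →ₗ[ℂ] ℂ)
    (hinv : ∀ a : A, rmapC φ' (Δ a) = φ' a • (1 : A)) :
    ∃ c : ℂ, φ' = c • φ := by
  obtain ⟨x, hx⟩ := exists_comp_mulRight_eq hφ₂ φ'
  have hφ'x : ∀ a, φ' a = φ (a * x) := fun a => by rw [← hx]; rfl
  have hΔx : Δ x = (1 : A) ⊗ₜ[ℂ] x := eq_of_rmapC_one_tmul_mul hφ₂ fun a => calc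
    rmapC φ (((1 : A) ⊗ₜ[ℂ] a) * Δ x) = S (rmapC φ (Δ a * ((1 : A) ⊗ₜ[ℂ] x))) := (hS a x).symm
    _ = φ' a • (1 : A) := by rw [rmapC_mul_one_tmul, hx, hinv, map_smul, hS1]
    _ = rmapC φ (((1 : A) ⊗ₜ[ℂ] a) * ((1 : A) ⊗ₜ[ℂ] x)) := by
      rw [Algebra.TensorProduct.tmul_mul_tmul, one_mul, rmapC_tmul, hφ'x]
  have hx_scalar : x = ε x • (1 : A) := by
    conv_lhs => rw [← hε₂ x, hΔx, rmapC_tmul]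
  refine ⟨ε x, LinearMap.ext fun a => ?_⟩
  calc φ' a = φ (a * (ε x • (1 : A))) := by rw [hφ'x, ← hx_scalar]
    _ = (ε x • φ) a := by rw [mul_smul_comm, mul_one, map_smul, LinearMap.smul_apply]

/-- If `φ` is a faithful left integral on `A` with antipode `S`
satisfying `S 1 = 1`, then every left invariant functional `φ'` on `A` is a scalar
multiple of `φ`. -/
theorem left_invariant_unique_up_to_scalar
    {A : Type*} [Ring A] [Algebra ℂ A] [FiniteDimensional ℂ A]
    (Δ : A →ₗ[ℂ] A ⊗[ℂ] A)
    (hcoassoc : ∀ a : A,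
      (TensorProduct.assoc ℂ A A A) (TensorProduct.map Δ LinearMap.id (Δ a)) =
        TensorProduct.map LinearMap.id Δ (Δ a))
    (ε : A →ₗ[ℂ] ℂ)
    (hε₁ : ∀ a : A, lmapC ε (Δ a) = a)
    (hε₂ : ∀ a : A, rmapC ε (Δ a) = a)
    (φ : A →ₗ[ℂ] ℂ)
    (hφ₁ : ∀ a : A, (∀ c : A, φ (a * c) = 0) → a = 0)
    (hφ₂ : ∀ c : A, (∀ a : A, φ (a * c) = 0) → c = 0)
    (S : A →ₗ[ℂ] A)
    (hS : ∀ a c : A,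
      S (rmapC φ (Δ a * ((1 : A) ⊗ₜ[ℂ] c))) = rmapC φ (((1 : A) ⊗ₜ[ℂ] a) * Δ c))
    (hS1 : S 1 = 1)
    (φ' : A →ₗ[ℂ] ℂ)
    (hinv : ∀ a : A, rmapC φ' (Δ a) = φ' a • (1 : A)) :
    ∃ c : ℂ, φ' = c • φ :=
  left_invariant_unique_up_to_scalar_general Δ ε hε₂ φ hφ₂ S hS hS1 φ' hinv
end

section
/- Let G be a finite group with subgroup H of order n, let A be the algebra of complex functions on G constant on double cosets HxH (with pointwise product), and define Δ on A by Δ(f)(p, q) = (1/n)·Σ_{h∈H} f(phq). Then Δ is an algebra homomorphism from A to A ⊗ A if and only if H is a normal subgroup of G. -/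
/-!
If `H` is normal, a right `H`-invariant function satisfies `f (p * h * q) = f (p * q)` for
`h ∈ H`, so `Δ f (p, q) = f (p * q)` and `Δ` is multiplicative. Conversely, for the indicator `e`
of `H` the value `Δ e (g, g⁻¹)` is the proportion of `h ∈ H` with `g * h * g⁻¹ ∈ H`. Since
`e * e = e`, multiplicativity makes this proportion an idempotent; it is nonzero (take `h = 1`),
hence equal to `1`, so `g * H * g⁻¹ ⊆ H`.
-/

open Finset

namespace Subgroup

variable {G : Type*} [Group G] (H : Subgroup G) {M : Type*}

def IsBiInvariant (f : G → M) : Prop :=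
  ∀ h ∈ H, ∀ k ∈ H, ∀ p : G, f (h * p * k) = f p

variable {H} in
theorem IsBiInvariant.apply_mul_mem {f : G → M} (hf : IsBiInvariant H f) :
    ∀ k ∈ H, ∀ x, f (x * k) = f x := fun k hk x => by
  simpa using hf 1 H.one_mem k hk x

variable {H} in
theorem IsBiInvariant.mul [Mul M] {f g : G → M} (hf : IsBiInvariant H f)
    (hg : IsBiInvariant H g) : IsBiInvariant H (f * g) := fun h hh k hk p => by
  simp only [Pi.mul_apply, hf h hh k hk p, hg h hh k hk p]

theorem isBiInvariant_indicator_one [Zero M] [One M] :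
    IsBiInvariant H ((H : Set G).indicator (1 : G → M)) := by
  classical
  intro h hh k hk p
  simp only [Set.indicator_apply, SetLike.mem_coe, Pi.one_apply, H.mul_mem_cancel_right hk,
    H.mul_mem_cancel_left hh]

variable [Fintype G] [DecidablePred (· ∈ H)] {K : Type*} [Field K]

noncomputable def heckeCoproduct (f : G → K) (p q : G) : K :=
  (1 / (Nat.card H : K)) * ∑ h ∈ univ.filter (· ∈ H), f (p * h * q)

theorem card_filter_mem : #(univ.filter (· ∈ H)) = Nat.card H := by
  rw [Nat.card_eq_fintype_card, Fintype.card_subtype]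

theorem heckeCoproduct_indicator_one_conj (g : G) :
    heckeCoproduct H ((H : Set G).indicator (1 : G → K)) g g⁻¹ =
      #((univ.filter (· ∈ H)).filter (fun h => g * h * g⁻¹ ∈ H)) / (Nat.card H : K) := by
  classical
  simp only [heckeCoproduct, Set.indicator_apply, SetLike.mem_coe, Pi.one_apply]
  rw [sum_boole, one_div_mul_eq_div]

variable {H}

theorem sum_apply_mul_mem_mul_of_normal [H.Normal] [AddCommMonoid M] {f : G → M}
    (hf : ∀ k ∈ H, ∀ x, f (x * k) = f x) (p q : G) :
    ∑ h ∈ univ.filter (· ∈ H), f (p * h * q) = Nat.card H • f (p * q) := by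
  have hconst : ∀ h ∈ univ.filter (· ∈ H), f (p * h * q) = f (p * q) := fun h hh => by
    have hconj : q⁻¹ * h * q ∈ H := Normal.conj_mem' ‹_› h (mem_filter.mp hh).2 q
    simpa [mul_assoc] using hf _ hconj (p * q)
  rw [sum_congr rfl hconst, sum_const, card_filter_mem]

theorem heckeCoproduct_eq_of_normal [CharZero K] [H.Normal] {f : G → K}
    (hf : ∀ k ∈ H, ∀ x, f (x * k) = f x) (p q : G) :
    heckeCoproduct H f p q = f (p * q) := by
  have hcard : (Nat.card H : K) ≠ 0 := Nat.cast_ne_zero.mpr Nat.card_pos.ne'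
  rw [heckeCoproduct, sum_apply_mul_mem_mul_of_normal hf, nsmul_eq_mul, ← mul_assoc,
    one_div_mul_cancel hcard, one_mul]

theorem heckeCoproduct_mul_of_normal [CharZero K] [H.Normal] {f g : G → K}
    (hf : IsBiInvariant H f) (hg : IsBiInvariant H g) (p q : G) :
    heckeCoproduct H (f * g) p q = heckeCoproduct H f p q * heckeCoproduct H g p q := by
  simp only [heckeCoproduct_eq_of_normal (hf.mul hg).apply_mul_mem,
    heckeCoproduct_eq_of_normal hf.apply_mul_mem, heckeCoproduct_eq_of_normal hg.apply_mul_mem,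
    Pi.mul_apply]

theorem normal_of_heckeCoproduct_mul [CharZero K]
    (hmul : ∀ f g : G → K, IsBiInvariant H f → IsBiInvariant H g → ∀ p q : G,
      heckeCoproduct H (f * g) p q = heckeCoproduct H f p q * heckeCoproduct H g p q) :
    H.Normal := by
  refine ⟨fun n hn g => ?_⟩
  set conjMem := (univ.filter (· ∈ H)).filter (fun h => g * h * g⁻¹ ∈ H)
  have hidem := hmul _ _ (isBiInvariant_indicator_one H) (isBiInvariant_indicator_one H) g g⁻¹
  have hsq : (H : Set G).indicator (1 : G → K) * (H : Set G).indicator 1 =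
      (H : Set G).indicator 1 := by
    ext x
    by_cases hx : x ∈ H <;> simp [hx]
  rw [hsq, heckeCoproduct_indicator_one_conj] at hidem
  have hcard : (Nat.card H : K) ≠ 0 := Nat.cast_ne_zero.mpr Nat.card_pos.ne'
  have hratio : (#conjMem : K) / Nat.card H ≠ 0 := div_ne_zero
    (Nat.cast_ne_zero.mpr (card_ne_zero.mpr ⟨1, by simp [conjMem, H.one_mem]⟩)) hcard
  have hfull : #conjMem = #(univ.filter (· ∈ H)) := by
    have hone := (mul_eq_left₀ hratio).mp hidem.symm
    rw [card_filter_mem, ← Nat.cast_inj (R := K), ← div_eq_one_iff_eq hcard, hone]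
  exact filter_card_eq hfull n (by simpa using hn)

end Subgroup

open Subgroup in
/-- Let `G` be a finite group and `H` a subgroup of order `n`. On
the algebra of functions constant on double cosets `HxH` (pointwise product),
with coproduct `Δ(f)(p, q) = (1/n) Σ_{h ∈ H} f(p h q)` (viewed pointwise on
`G × G`), the coproduct `Δ` is an algebra homomorphism if and only if `H` is a
normal subgroup of `G`. -/
theorem hecke_coproduct_hom_iff_normal
    {G : Type*} [Group G] [Fintype G] (H : Subgroup G) [DecidablePred (· ∈ H)] :
    (∀ f g : G → ℂ,
        (∀ h ∈ H, ∀ k ∈ H, ∀ p : G, f (h * p * k) = f p) →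
        (∀ h ∈ H, ∀ k ∈ H, ∀ p : G, g (h * p * k) = g p) →
        ∀ p q : G,
          (1 / (Nat.card H : ℂ)) *
              ∑ h ∈ Finset.univ.filter (· ∈ H), (f * g) (p * h * q) =
            ((1 / (Nat.card H : ℂ)) *
                ∑ h ∈ Finset.univ.filter (· ∈ H), f (p * h * q)) *
              ((1 / (Nat.card H : ℂ)) *
                ∑ h ∈ Finset.univ.filter (· ∈ H), g (p * h * q))) ↔
      H.Normal :=
  ⟨normal_of_heckeCoproduct_mul, fun _ _ _ hf hg => heckeCoproduct_mul_of_normal hf hg⟩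
end
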